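/- f(7) = 12 and d(7) = 37. In particular, every domino covering of the 7 × 7 board S₇ by 38 distinct dominoes contains a domino whose removal still leaves a domino covering of S₇. -/

import Mathlib

/-- A cell of the square grid. -/
abbrev Cell : Type := ℤ × ℤ

/-- Two cells are adjacent iff they differ by 1 in exactly one coordinate. -/
def Adj (p q : Cell) : Prop := |p.1 - q.1| + |p.2 - q.2| = 1

/-- A board: a finite nonempty set of cells, each adjacent to another cell of the board. -/
def IsBoard (B : Set Cell) : Prop :=
  B.Finite ∧ B.Nonempty ∧ ∀ p ∈ B, ∃ q ∈ B, Adj p q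

/-- A domino of `B`: a two-element subset of `B` whose cells are adjacent. -/
def IsDomino (B : Set Cell) (e : Finset Cell) : Prop :=
  ∃ p q : Cell, p ∈ B ∧ q ∈ B ∧ Adj p q ∧ e = {p, q}

/-- A domino covering of `B`: a finite set of dominoes of `B` whose union is `B`. -/
def IsDominoCovering (B : Set Cell) (D : Finset (Finset Cell)) : Prop :=
  (∀ e ∈ D, IsDomino B e) ∧ (⋃ e ∈ D, (↑e : Set Cell)) = B

/-- A saturated domino covering: removing any domino leaves some cell uncovered. -/
def IsSaturatedCovering (B : Set Cell) (D : Finset (Finset Cell)) : Prop :=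
  IsDominoCovering B D ∧ ∀ e ∈ D, (⋃ e' ∈ D.erase e, (↑e' : Set Cell)) ⊂ B

/-- `dNum B` is the maximum number of dominoes in a saturated domino covering of `B`. -/
noncomputable def dNum (B : Set Cell) : ℕ :=
  sSup {k : ℕ | ∃ D : Finset (Finset Cell), IsSaturatedCovering B D ∧ D.card = k}

/-- The X-pentomino centered at `c`: the cell `c` together with its four adjacent cells. -/
def Xpent (c : Cell) : Set Cell :=
  {c, (c.1 + 1, c.2), (c.1 - 1, c.2), (c.1, c.2 + 1), (c.1, c.2 - 1)}

/-- A set of cells is connected under adjacency. -/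
def ConnectedUnderAdj (F : Set Cell) : Prop :=
  ∀ p ∈ F, ∀ q ∈ F, Relation.ReflTransGen (fun a b => a ∈ F ∧ b ∈ F ∧ Adj a b) p q

/-- A fragment: a connected subset of some X-pentomino with at least two cells. -/
def IsFragment (F : Set Cell) : Prop :=
  (∃ c : Cell, F ⊆ Xpent c) ∧ 2 ≤ F.ncard ∧ ConnectedUnderAdj F

/-- A fragment tiling of `B`: a partition of `B` into pairwise disjoint fragments. -/
def IsFragmentTiling (B : Set Cell) (T : Finset (Set Cell)) : Prop :=
  (∀ F ∈ T, IsFragment F) ∧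
  (∀ F ∈ T, ∀ G ∈ T, F ≠ G → Disjoint F G) ∧
  (⋃ F ∈ T, F) = B

/-- `fNum B` is the minimum number of fragments in a fragment tiling of `B`. -/
noncomputable def fNum (B : Set Cell) : ℕ :=
  sInf {k : ℕ | ∃ T : Finset (Set Cell), IsFragmentTiling B T ∧ T.card = k}

/-- `xNum B` is the minimum number of X-pentominoes (centered anywhere, allowed to
overlap and to extend outside `B`) whose union covers `B`. -/
noncomputable def xNum (B : Set Cell) : ℕ :=
  sInf {k : ℕ | ∃ C : Finset Cell, B ⊆ (⋃ c ∈ C, Xpent c) ∧ C.card = k}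

/-- The `n × n` board `{0, …, n-1} × {0, …, n-1}`. -/
def Sq (n : ℕ) : Set Cell := {p : Cell | 0 ≤ p.1 ∧ p.1 < n ∧ 0 ≤ p.2 ∧ p.2 < n}

/-!
In a saturated domino covering every domino has a cell covered by no other domino. Collapsing
each such private cell onto the other cell of its domino partitions the board into stars, that
is, into fragments centred at the cells that are not private. Conversely, a fragment always
contains its centre (two arms of an X are never adjacent), so it splits into the dominoes joining
the centre to its arms, each arm being private to its domino. Hence `d(B) + f(B) = |B|`.

For `S₇`, a weighting of the cells with total `161` in which every X-pentomino weighs at most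
`14` forces `f(7) ≥ ⌈161 / 14⌉ = 12`, and an explicit tiling by `12` fragments gives equality.
So `d(7) = 49 - 12 = 37`, and a covering by `38` dominoes cannot be saturated.
-/

theorem Adj.symm {p q : Cell} (h : Adj p q) : Adj q p := by
  unfold Adj at *
  rwa [abs_sub_comm q.1, abs_sub_comm q.2]

theorem Adj.ne {p q : Cell} (h : Adj p q) : p ≠ q := by
  rintro rfl
  simp [Adj] at h

theorem mem_xpent_iff {p c : Cell} : p ∈ Xpent c ↔ p = c ∨ Adj p c := by
  obtain ⟨x, y⟩ := p
  obtain ⟨a, b⟩ := c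
  simp only [Xpent, Set.mem_insert_iff, Set.mem_singleton_iff, Prod.mk.injEq, Adj]
  constructor
  · rintro (h | h | h | h | h) <;> simp [h.1, h.2]
  · rintro (h | h)
    · exact Or.inl h
    · rcases abs_cases (x - a) with ⟨h1, h1'⟩ | ⟨h1, h1'⟩ <;>
        rcases abs_cases (y - b) with ⟨h2, h2'⟩ | ⟨h2, h2'⟩ <;> omega

theorem xpent_finite (c : Cell) : (Xpent c).Finite := by
  unfold Xpent
  exact Set.toFinite _

theorem not_adj_of_mem_xpent {p q c : Cell} (hp : p ∈ Xpent c) (hq : q ∈ Xpent c)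
    (hpc : p ≠ c) (hqc : q ≠ c) : ¬ Adj p q := by
  simp only [Xpent, Set.mem_insert_iff, Set.mem_singleton_iff] at hp hq
  rcases hp with rfl | rfl | rfl | rfl | rfl <;> rcases hq with rfl | rfl | rfl | rfl | rfl <;>
    simp_all [Adj] <;> ring_nf <;> norm_num

theorem IsFragment.finite {F : Set Cell} (hF : IsFragment F) : F.Finite :=
  let ⟨⟨c, hsub⟩, _⟩ := hF
  (xpent_finite c).subset hsub

theorem isFragment_of_star {F : Set Cell} {c : Cell} (hc : c ∈ F) (hF : F ⊆ Xpent c)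
    (h2 : 2 ≤ F.ncard) : IsFragment F := by
  refine ⟨⟨c, hF⟩, h2, ?_⟩
  have star : ∀ p ∈ F,
      Relation.ReflTransGen (fun a b => a ∈ F ∧ b ∈ F ∧ Adj a b) p c ∧
      Relation.ReflTransGen (fun a b => a ∈ F ∧ b ∈ F ∧ Adj a b) c p := by
    intro p hp
    rcases mem_xpent_iff.1 (hF hp) with rfl | hpc
    · exact ⟨.refl, .refl⟩
    · exact ⟨.single ⟨hp, hc, hpc⟩, .single ⟨hc, hp, hpc.symm⟩⟩
  intro p hp q hq
  exact (star p hp).1.trans (star q hq).2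

theorem IsFragment.exists_center {F : Set Cell} (hF : IsFragment F) :
    ∃ c ∈ F, F ⊆ Xpent c := by
  obtain ⟨⟨c, hsub⟩, h2, hconn⟩ := hF
  refine ⟨c, ?_, hsub⟩
  by_contra hc
  obtain ⟨p, q, hp, hq, hpq⟩ := (Set.one_lt_ncard_iff ((xpent_finite c).subset hsub)).1 h2
  rcases (hconn p hp q hq).cases_head with rfl | ⟨a, ⟨-, ha, hpa⟩, -⟩
  · exact hpq rfl
  · exact not_adj_of_mem_xpent (hsub hp) (hsub ha) (ne_of_mem_of_not_mem hp hc)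
      (ne_of_mem_of_not_mem ha hc) hpa

section Coverings

variable {B : Set Cell} {D : Finset (Finset Cell)}

theorem biUnion_subset_of_isDomino (hD : ∀ e ∈ D, IsDomino B e) :
    (⋃ e ∈ D, (e : Set Cell)) ⊆ B := by
  refine Set.iUnion₂_subset fun e he => ?_
  obtain ⟨p, q, hp, hq, -, rfl⟩ := hD e he
  simp [Set.insert_subset_iff, hp, hq]

theorem IsDominoCovering.finite (hD : IsDominoCovering B D) : B.Finite := by
  rw [← hD.2]
  exact D.finite_toSet.biUnion fun e _ => e.finite_toSet

theorem isSaturatedCovering_iff : IsSaturatedCovering B D ↔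
    IsDominoCovering B D ∧ ∀ e ∈ D, ∃ p ∈ e, ∀ e' ∈ D, p ∈ e' → e' = e := by
  refine and_congr_right fun hD => forall₂_congr fun e he => ?_
  have hsub : (⋃ e' ∈ D.erase e, (e' : Set Cell)) ⊆ B :=
    biUnion_subset_of_isDomino fun e' he' => hD.1 e' (Finset.mem_of_mem_erase he')
  rw [Set.ssubset_iff_of_subset hsub]
  simp only [Set.mem_iUnion₂, Finset.mem_erase, Finset.mem_coe, not_exists]
  constructor
  · rintro ⟨p, hpB, hp⟩
    rw [← hD.2, Set.mem_iUnion₂] at hpB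
    obtain ⟨e'', he'', hpe''⟩ := hpB
    have private_p : ∀ e' ∈ D, p ∈ e' → e' = e := fun e' he' hpe' =>
      by_contra fun hne => hp e' ⟨hne, he'⟩ hpe'
    exact ⟨p, private_p e'' he'' hpe'' ▸ hpe'', private_p⟩
  · rintro ⟨p, hpe, hp⟩
    refine ⟨p, ?_, fun e' he' hpe' => he'.1 (hp e' he'.2 hpe')⟩
    rw [← hD.2]
    exact Set.mem_biUnion he hpe

theorem IsDominoCovering.isSaturatedCovering (hD : IsDominoCovering B D)
    (h : ∀ e ∈ D, ¬ IsDominoCovering B (D.erase e)) : IsSaturatedCovering B D := by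
  refine ⟨hD, fun e he => ?_⟩
  have hdom : ∀ e' ∈ D.erase e, IsDomino B e' :=
    fun e' he' => hD.1 e' (Finset.mem_of_mem_erase he')
  exact (biUnion_subset_of_isDomino hdom).ssubset_of_ne fun heq => h e he ⟨hdom, heq⟩

end Coverings

/-- `h` collapses every star of a partition of `B` onto its centre: the fibre of a fixed point
`c` is a fragment inside `Xpent c`, and each arm `p ≠ h p` carries the domino `{p, h p}`. -/
structure IsStarRetraction (B : Set Cell) (h : Cell → Cell) : Prop where
  mapsTo : Set.MapsTo h B B
  idem : ∀ p ∈ B, h (h p) = h p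
  adj : ∀ p ∈ B, h p ≠ p → Adj p (h p)
  exists_preimage : ∀ p ∈ B, h p = p → ∃ q ∈ B, q ≠ p ∧ h q = p

theorem ncard_fixed_add_ncard_moved {B : Set Cell} (hB : B.Finite) (h : Cell → Cell) :
    {p ∈ B | h p = p}.ncard + {p ∈ B | h p ≠ p}.ncard = B.ncard :=
  Set.ncard_inter_add_ncard_sdiff_eq_ncard B {p | h p = p} hB

section StarRetraction

variable {B : Set Cell} {h : Cell → Cell}

theorem IsStarRetraction.exists_fragmentTiling (hB : B.Finite)
    (hh : IsStarRetraction B h) :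
    ∃ T : Finset (Set Cell), IsFragmentTiling B T ∧ T.card = {p ∈ B | h p = p}.ncard := by
  set fiber : Cell → Set Cell := fun c => {p ∈ B | h p = c}
  have hfix : {p ∈ B | h p = p}.Finite := hB.subset (Set.sep_subset _ _)
  refine ⟨hfix.toFinset.image fiber, ⟨?_, ?_, ?_⟩, ?_⟩
  · simp only [Finset.mem_image, Set.Finite.mem_toFinset]
    rintro _ ⟨c, hc, rfl⟩
    obtain ⟨q, hqB, hqc, hq⟩ := hh.exists_preimage c hc.1 hc.2
    refine isFragment_of_star hc (fun p ⟨hpB, hpc⟩ => mem_xpent_iff.2 ?_) ?_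
    · rcases eq_or_ne (h p) p with hpp | hpp
      · exact Or.inl (hpp.symm.trans hpc)
      · exact Or.inr (hpc ▸ hh.adj p hpB hpp)
    · exact (Set.one_lt_ncard_iff (hB.subset (Set.sep_subset _ _))).2
        ⟨c, q, hc, ⟨hqB, hq⟩, hqc.symm⟩
  · simp only [Finset.mem_image]
    rintro _ ⟨c, -, rfl⟩ _ ⟨c', -, rfl⟩ hne
    exact Set.disjoint_left.2 fun p hp hp' => hne (congrArg fiber (hp.2.symm.trans hp'.2))
  · ext p
    simp only [Finset.mem_image, Set.Finite.mem_toFinset, Set.mem_iUnion, exists_prop]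
    constructor
    · rintro ⟨_, ⟨c, -, rfl⟩, hp⟩
      exact hp.1
    · intro hp
      exact ⟨fiber (h p), ⟨h p, ⟨hh.mapsTo hp, hh.idem p hp⟩, rfl⟩, hp, rfl⟩
  · rw [Finset.card_image_of_injOn, Set.ncard_eq_toFinset_card _ hfix]
    intro c hc c' _ hcc'
    rw [Set.Finite.coe_toFinset] at hc
    have hc' : c ∈ fiber c' := hcc' ▸ hc
    exact hc.2.symm.trans hc'.2

theorem IsStarRetraction.exists_saturatedCovering (hB : B.Finite)
    (hh : IsStarRetraction B h) :
    ∃ D : Finset (Finset Cell),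
      IsSaturatedCovering B D ∧ D.card = {p ∈ B | h p ≠ p}.ncard := by
  have hmov : {p ∈ B | h p ≠ p}.Finite := hB.subset (Set.sep_subset _ _)
  have arm_private :
      ∀ p q, h p ≠ p → q ∈ B → p ∈ ({q, h q} : Finset Cell) → p = q := by
    intro p q hp hq hpq
    rcases Finset.mem_insert.1 hpq with rfl | hpq
    · rfl
    · rw [Finset.mem_singleton] at hpq
      exact absurd (by rw [hpq, hh.idem q hq]) hp
  set D := hmov.toFinset.image fun p => ({p, h p} : Finset Cell)
  have hdom : ∀ e ∈ D, IsDomino B e := by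
    simp only [D, Finset.mem_image, Set.Finite.mem_toFinset]
    rintro _ ⟨p, hp, rfl⟩
    exact ⟨p, h p, hp.1, hh.mapsTo hp.1, hh.adj p hp.1 hp.2, rfl⟩
  refine ⟨D, isSaturatedCovering_iff.2 ⟨⟨hdom, ?_⟩, ?_⟩, ?_⟩
  · refine (biUnion_subset_of_isDomino hdom).antisymm fun p hp => ?_
    rcases eq_or_ne (h p) p with hpp | hpp
    · obtain ⟨q, hqB, hqp, hq⟩ := hh.exists_preimage p hp hpp
      refine Set.mem_biUnion (x := {q, h q}) (Finset.mem_image_of_mem _ ?_) (by simp [hq])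
      exact hmov.mem_toFinset.2 ⟨hqB, hq ▸ hqp.symm⟩
    · exact Set.mem_biUnion (Finset.mem_image_of_mem _ (hmov.mem_toFinset.2 ⟨hp, hpp⟩))
        (by simp)
  · simp only [D, Finset.mem_image, Set.Finite.mem_toFinset]
    rintro _ ⟨p, hp, rfl⟩
    refine ⟨p, by simp, ?_⟩
    rintro _ ⟨q, hq, rfl⟩ hpq
    rw [arm_private p q hp.2 hq.1 hpq]
  · rw [Finset.card_image_of_injOn, Set.ncard_eq_toFinset_card _ hmov]
    intro p hp q hq hpq
    rw [Set.Finite.coe_toFinset] at hp hq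
    refine arm_private p q hp.2 hq.1 ?_
    rw [← show ({p, h p} : Finset Cell) = {q, h q} from hpq]
    simp

theorem isStarRetraction_extend {ι : Type*} {v u : ι → Cell} (hv : Function.Injective v)
    (hvB : ∀ i, v i ∈ B) (huB : ∀ i, u i ∈ B) (hadj : ∀ i, Adj (v i) (u i))
    (hu : ∀ i j, u i ≠ v j) (hcover : ∀ p ∈ B, p ∉ Set.range v → ∃ i, u i = p) :
    IsStarRetraction B (Function.extend v u id) ∧
      {p ∈ B | Function.extend v u id p ≠ p} = Set.range v := by
  set h := Function.extend v u id
  have h_v : ∀ i, h (v i) = u i := hv.extend_apply u id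
  have h_of_not_mem : ∀ p ∉ Set.range v, h p = p := fun p hp => Function.extend_apply' _ _ _ hp
  refine ⟨⟨fun p hp => ?_, fun p _ => ?_, fun p _ hne => ?_, fun p hp hfix => ?_⟩, ?_⟩
  · by_cases hpv : p ∈ Set.range v
    · obtain ⟨i, rfl⟩ := hpv
      exact h_v i ▸ huB i
    · exact (h_of_not_mem p hpv).symm ▸ hp
  · by_cases hpv : p ∈ Set.range v
    · obtain ⟨i, rfl⟩ := hpv
      rw [h_v, h_of_not_mem]
      rintro ⟨j, hj⟩
      exact hu i j hj.symm
    · rw [h_of_not_mem p hpv, h_of_not_mem p hpv]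
  · by_cases hpv : p ∈ Set.range v
    · obtain ⟨i, rfl⟩ := hpv
      exact h_v i ▸ hadj i
    · exact absurd (h_of_not_mem p hpv) hne
  · have hpv : p ∉ Set.range v := by
      rintro ⟨i, rfl⟩
      exact (hadj i).ne (h_v i ▸ hfix).symm
    obtain ⟨i, rfl⟩ := hcover p hp hpv
    exact ⟨v i, hvB i, (hadj i).ne, h_v i⟩
  · ext p
    constructor
    · rintro ⟨-, hne⟩
      exact by_contra fun hpv => hne (h_of_not_mem p hpv)
    · rintro ⟨i, rfl⟩
      exact ⟨hvB i, h_v i ▸ (hadj i).ne.symm⟩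

end StarRetraction

theorem finsum_mem_xpent {M : Type*} [AddCommMonoid M] (f : Cell → M) (c : Cell) :
    ∑ᶠ p ∈ Xpent c, f p =
      f c + f (c.1 + 1, c.2) + f (c.1 - 1, c.2) + f (c.1, c.2 + 1) + f (c.1, c.2 - 1) := by
  rw [Xpent, finsum_mem_insert _ ?_ (Set.toFinite _), finsum_mem_insert _ ?_ (Set.toFinite _),
    finsum_mem_insert _ ?_ (Set.toFinite _), finsum_mem_insert _ ?_ (Set.toFinite _),
    finsum_mem_singleton]
  · simp only [add_assoc]
  all_goals
    simp only [Set.mem_insert_iff, Set.mem_singleton_iff, Prod.ext_iff]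
    omega

section Correspondence

variable {B : Set Cell} {T : Finset (Set Cell)} {D : Finset (Finset Cell)}

theorem IsFragmentTiling.finite (hT : IsFragmentTiling B T) : B.Finite := by
  rw [← hT.2.2]
  exact T.finite_toSet.biUnion fun F hF => (hT.1 F hF).finite

theorem IsFragmentTiling.eq_of_mem (hT : IsFragmentTiling B T) {F G : Set Cell} {p : Cell}
    (hF : F ∈ T) (hG : G ∈ T) (hpF : p ∈ F) (hpG : p ∈ G) : F = G :=
  by_contra fun hne => Set.disjoint_left.1 (hT.2.1 F hF G hG hne) hpF hpG

theorem IsFragmentTiling.exists_starRetraction (hT : IsFragmentTiling B T) :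
    ∃ h, IsStarRetraction B h ∧ {p ∈ B | h p = p}.ncard = T.card := by
  set center : Set Cell → Cell := fun F => Classical.epsilon fun c => c ∈ F ∧ F ⊆ Xpent c
  have hcenter : ∀ F ∈ T, center F ∈ F ∧ F ⊆ Xpent (center F) :=
    fun F hF => Classical.epsilon_spec (hT.1 F hF).exists_center
  set tile : Cell → Set Cell := fun p => Classical.epsilon fun F => F ∈ T ∧ p ∈ F
  have htile : ∀ p ∈ B, tile p ∈ T ∧ p ∈ tile p := by
    intro p hp
    rw [← hT.2.2, Set.mem_iUnion₂] at hp
    exact Classical.epsilon_spec (by simpa only [exists_prop] using hp)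
  have tile_eq : ∀ p ∈ B, ∀ F ∈ T, p ∈ F → tile p = F :=
    fun p hp F hF hpF => hT.eq_of_mem (htile p hp).1 hF (htile p hp).2 hpF
  have subset_B : ∀ F ∈ T, F ⊆ B := fun F hF p hp => hT.2.2 ▸ Set.mem_biUnion hF hp
  have center_mem : ∀ p ∈ B, center (tile p) ∈ B ∧ tile (center (tile p)) = tile p := by
    intro p hp
    have hcB := subset_B _ (htile p hp).1 (hcenter _ (htile p hp).1).1
    exact ⟨hcB, tile_eq _ hcB _ (htile p hp).1 (hcenter _ (htile p hp).1).1⟩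
  refine ⟨fun p => center (tile p), ⟨fun p hp => (center_mem p hp).1, ?_, ?_, ?_⟩, ?_⟩
  · intro p hp
    simp only [(center_mem p hp).2]
  · intro p hp hne
    exact (mem_xpent_iff.1 ((hcenter _ (htile p hp).1).2 (htile p hp).2)).resolve_left hne.symm
  · intro p hp hfix
    have h2 := (hT.1 _ (htile p hp).1).2.1
    obtain ⟨q, hq, hqp⟩ := Set.exists_ne_of_one_lt_ncard h2 p
    have hqB := subset_B _ (htile p hp).1 hq
    exact ⟨q, hqB, hqp, by simp only [tile_eq q hqB _ (htile p hp).1 hq, hfix]⟩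
  · have hfix : {p ∈ B | center (tile p) = p} = center '' T := by
      ext p
      constructor
      · rintro ⟨hp, hfix⟩
        exact ⟨tile p, (htile p hp).1, hfix⟩
      · rintro ⟨F, hF, rfl⟩
        have hcB := subset_B F hF (hcenter F hF).1
        exact ⟨hcB, by rw [tile_eq _ hcB F hF (hcenter F hF).1]⟩
    rw [hfix, Set.InjOn.ncard_image, Set.ncard_coe_finset]
    intro F hF G hG hFG
    exact hT.eq_of_mem hF hG (hcenter F hF).1 (hFG ▸ (hcenter G hG).1)

theorem IsSaturatedCovering.exists_private_cell (hD : IsSaturatedCovering B D) {e : Finset Cell}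
    (he : e ∈ D) : ∃ v u, e = {v, u} ∧ Adj v u ∧ ∀ e' ∈ D, v ∈ e' → e' = e := by
  obtain ⟨hcov, hpriv⟩ := isSaturatedCovering_iff.1 hD
  obtain ⟨p, hpe, hp⟩ := hpriv e he
  obtain ⟨a, b, -, -, hab, rfl⟩ := hcov.1 e he
  rcases Finset.mem_insert.1 hpe with rfl | hpb
  · exact ⟨p, b, rfl, hab, hp⟩
  · rw [Finset.mem_singleton] at hpb
    subst hpb
    exact ⟨p, a, Finset.pair_comm a p, hab.symm, hp⟩

theorem IsSaturatedCovering.exists_starRetraction (hD : IsSaturatedCovering B D) :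
    ∃ h, IsStarRetraction B h ∧ {p ∈ B | h p ≠ p}.ncard = D.card := by
  choose v u hvu hadj hv using fun e : D => hD.exists_private_cell e.2
  have v_mem : ∀ e : D, v e ∈ (e : Finset Cell) := fun e => hvu e ▸ by simp
  have u_mem : ∀ e : D, u e ∈ (e : Finset Cell) := fun e => hvu e ▸ by simp
  have mem_B : ∀ e : D, ∀ p ∈ (e : Finset Cell), p ∈ B :=
    fun e p hp => hD.1.2 ▸ Set.mem_biUnion e.2 hp
  have hv_inj : Function.Injective v := fun e e' hee' =>
    Subtype.ext (hv e' e e.2 (hee' ▸ v_mem e))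
  have u_ne_v : ∀ e e' : D, u e ≠ v e' := by
    intro e e' hee'
    obtain rfl : e = e' := Subtype.ext (hv e' e e.2 (hee' ▸ u_mem e))
    exact (hadj e).ne hee'.symm
  have hcover : ∀ p ∈ B, p ∉ Set.range v → ∃ e, u e = p := by
    intro p hp hpv
    rw [← hD.1.2, Set.mem_iUnion₂] at hp
    obtain ⟨e, he, hpe⟩ := hp
    rw [Finset.mem_coe, show e = _ from hvu ⟨e, he⟩, Finset.mem_insert,
      Finset.mem_singleton] at hpe
    exact ⟨⟨e, he⟩, (hpe.resolve_left fun h' => hpv ⟨_, h'.symm⟩).symm⟩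
  obtain ⟨hh, hmoved⟩ := isStarRetraction_extend hv_inj (fun e => mem_B e _ (v_mem e))
    (fun e => mem_B e _ (u_mem e)) hadj u_ne_v hcover
  refine ⟨_, hh, ?_⟩
  rw [hmoved, Set.ncard_range_of_injective hv_inj, Nat.card_eq_fintype_card, Fintype.card_coe]

theorem IsSaturatedCovering.exists_fragmentTiling (hD : IsSaturatedCovering B D) :
    ∃ T : Finset (Set Cell), IsFragmentTiling B T ∧ T.card + D.card = B.ncard := by
  have hB := hD.1.finite
  obtain ⟨h, hh, hmoved⟩ := hD.exists_starRetraction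
  obtain ⟨T, hT, hfixed⟩ := hh.exists_fragmentTiling hB
  exact ⟨T, hT, by rw [hfixed, ← hmoved, ncard_fixed_add_ncard_moved hB]⟩

theorem IsFragmentTiling.exists_saturatedCovering (hT : IsFragmentTiling B T) :
    ∃ D : Finset (Finset Cell), IsSaturatedCovering B D ∧ D.card + T.card = B.ncard := by
  have hB := hT.finite
  obtain ⟨h, hh, hfixed⟩ := hT.exists_starRetraction
  obtain ⟨D, hD, hmoved⟩ := hh.exists_saturatedCovering hB
  exact ⟨D, hD, by rw [hmoved, ← hfixed, add_comm, ncard_fixed_add_ncard_moved hB]⟩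

theorem IsSaturatedCovering.card_le_dNum (hD : IsSaturatedCovering B D) : D.card ≤ dNum B := by
  refine le_csSup ⟨B.ncard, ?_⟩ ⟨D, hD, rfl⟩
  rintro _ ⟨D', hD', rfl⟩
  obtain ⟨T, -, hT⟩ := hD'.exists_fragmentTiling
  omega

theorem dNum_add_fNum (hT : IsFragmentTiling B T) : dNum B + fNum B = B.ncard := by
  obtain ⟨T₀, hT₀, hcard₀⟩ :=
    Nat.sInf_mem (s := {k | ∃ T, IsFragmentTiling B T ∧ T.card = k}) ⟨T.card, T, hT, rfl⟩
  obtain ⟨D₀, hD₀, hD₀card⟩ := hT₀.exists_saturatedCovering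
  suffices dNum B = D₀.card by rw [this, fNum, ← hcard₀, hD₀card]
  refine IsGreatest.csSup_eq ⟨⟨D₀, hD₀, rfl⟩, ?_⟩
  rintro _ ⟨D, hD, rfl⟩
  obtain ⟨T', hT', hT'card⟩ := hD.exists_fragmentTiling
  have : fNum B ≤ T'.card := Nat.sInf_le ⟨T', hT', rfl⟩
  rw [fNum] at this
  omega

theorem IsFragmentTiling.finsum_le_mul_card (hT : IsFragmentTiling B T) (w : Cell → ℕ) {m : ℕ}
    (hw : ∀ c, ∑ᶠ p ∈ Xpent c, w p ≤ m) :
    ∑ᶠ p ∈ B, w p ≤ m * T.card := by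
  have hpart : ∑ᶠ p ∈ B, w p = ∑ F ∈ T, ∑ᶠ p ∈ F, w p := by
    rw [← hT.2.2, ← finsum_mem_coe_finset]
    exact finsum_mem_biUnion (fun F hF G hG hne => hT.2.1 F hF G hG hne) T.finite_toSet
      fun F hF => (hT.1 F hF).finite
  rw [hpart, mul_comm, ← smul_eq_mul, ← Finset.sum_const]
  refine Finset.sum_le_sum fun F hF => ?_
  obtain ⟨⟨c, hsub⟩, -⟩ := hT.1 F hF
  calc ∑ᶠ p ∈ F, w p ≤ ∑ᶠ p ∈ Xpent c, w p :=
        finsum_mem_add_sdiff (f := w) hsub (xpent_finite c) ▸ Nat.le_add_right _ _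
    _ ≤ m := hw c

end Correspondence

instance : DecidableRel Adj := fun p q =>
  inferInstanceAs (Decidable (|p.1 - q.1| + |p.2 - q.2| = 1))

theorem sq_eq_coe (n : ℕ) : Sq n = ↑(Finset.Ico (0 : ℤ) n ×ˢ Finset.Ico (0 : ℤ) n) := by
  ext p
  simp [Sq, and_assoc]

theorem ncard_sq (n : ℕ) : (Sq n).ncard = n ^ 2 := by
  rw [sq_eq_coe, Set.ncard_coe_finset, Finset.card_product, Int.card_Ico, sq]
  simp

theorem isFragmentTiling_image_coe {S : Finset Cell} {P : Finset (Finset Cell)}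
    (hstar : ∀ s ∈ P, ∃ c ∈ s, 2 ≤ s.card ∧ ∀ p ∈ s, p = c ∨ Adj p c)
    (hdisj : ∀ s ∈ P, ∀ t ∈ P, s ≠ t → Disjoint s t) (hcover : P.biUnion id = S) :
    IsFragmentTiling ↑S (P.image (↑)) := by
  simp only [IsFragmentTiling, Finset.mem_image, forall_exists_index, and_imp,
    forall_apply_eq_imp_iff₂]
  refine ⟨fun s hs => ?_, fun s hs t ht hne => ?_, ?_⟩
  · obtain ⟨c, hc, h2, harms⟩ := hstar s hs
    exact isFragment_of_star (c := c) hc (fun p hp => mem_xpent_iff.2 (harms p hp))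
      (by rwa [Set.ncard_coe_finset])
  · exact Finset.disjoint_coe.2 (hdisj s hs t ht fun h => hne (congrArg _ h))
  · ext p
    simp [← hcover]

def weightRows : List (List ℕ) :=
  [[6, 4, 4, 3, 4, 4, 6],
   [4, 0, 3, 3, 3, 0, 4],
   [4, 3, 4, 2, 4, 3, 4],
   [3, 3, 2, 1, 2, 3, 3],
   [4, 3, 4, 2, 4, 3, 4],
   [4, 0, 3, 3, 3, 0, 4],
   [6, 4, 4, 3, 4, 4, 6]]

def weight (p : Cell) : ℕ :=
  if 0 ≤ p.1 ∧ p.1 < 7 ∧ 0 ≤ p.2 ∧ p.2 < 7 then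
    (weightRows.getD p.1.toNat []).getD p.2.toNat 0
  else 0

theorem finsum_weight_sq : ∑ᶠ p ∈ Sq 7, weight p = 161 := by
  rw [sq_eq_coe, finsum_mem_coe_finset]
  decide

theorem weight_xpent_le_of_mem : ∀ c ∈ Finset.Icc (-1 : ℤ) 7 ×ˢ Finset.Icc (-1 : ℤ) 7,
    weight c + weight (c.1 + 1, c.2) + weight (c.1 - 1, c.2) + weight (c.1, c.2 + 1) +
      weight (c.1, c.2 - 1) ≤ 14 := by
  decide

theorem finsum_weight_xpent_le (c : Cell) : ∑ᶠ p ∈ Xpent c, weight p ≤ 14 := by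
  rw [finsum_mem_xpent]
  by_cases hc : c ∈ Finset.Icc (-1 : ℤ) 7 ×ˢ Finset.Icc (-1 : ℤ) 7
  · exact weight_xpent_le_of_mem c hc
  · -- an X-pentomino centred outside this box misses the board
    rw [Finset.mem_product, Finset.mem_Icc, Finset.mem_Icc] at hc
    simp only [weight]
    split_ifs <;> omega

def pieces12 : Finset (Finset Cell) :=
  {{(0, 0), (0, 1), (0, 2), (1, 1)},
   {(0, 3), (1, 2), (1, 3), (1, 4), (2, 3)},
   {(0, 4), (0, 5), (0, 6), (1, 5)},
   {(1, 0), (2, 0), (2, 1), (3, 0)},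
   {(1, 6), (2, 5), (2, 6), (3, 6)},
   {(2, 2), (3, 1), (3, 2), (3, 3), (4, 2)},
   {(2, 4), (3, 4), (3, 5), (4, 4)},
   {(4, 0), (4, 1), (5, 0)},
   {(4, 3), (5, 2), (5, 3), (5, 4), (6, 3)},
   {(4, 5), (4, 6), (5, 6)},
   {(5, 1), (6, 0), (6, 1), (6, 2)},
   {(5, 5), (6, 4), (6, 5), (6, 6)}}

theorem isFragmentTiling_pieces12 : IsFragmentTiling (Sq 7) (pieces12.image (↑)) := by
  rw [sq_eq_coe]
  refine isFragmentTiling_image_coe ?_ ?_ ?_ <;> decide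

theorem card_pieces12 : (pieces12.image ((↑) : Finset Cell → Set Cell)).card = 12 := by
  rw [Finset.card_image_of_injective _ Finset.coe_injective]
  decide

theorem fNum_sq_seven : fNum (Sq 7) = 12 := by
  refine le_antisymm (Nat.sInf_le ⟨_, isFragmentTiling_pieces12, card_pieces12⟩) ?_
  refine le_csInf ⟨_, _, isFragmentTiling_pieces12, card_pieces12⟩ ?_
  rintro _ ⟨T, hT, rfl⟩
  have := finsum_weight_sq ▸ hT.finsum_le_mul_card weight finsum_weight_xpent_le
  omega

/-- `f(7) = 12` and `d(7) = 37`; in particular every domino covering of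
the 7×7 board by 38 dominoes contains a domino whose removal still leaves a covering. -/
theorem fNum_dNum_seven :
    fNum (Sq 7) = 12 ∧ dNum (Sq 7) = 37 ∧
    ∀ D : Finset (Finset Cell), IsDominoCovering (Sq 7) D → D.card = 38 →
      ∃ e ∈ D, IsDominoCovering (Sq 7) (D.erase e) := by
  have hd : dNum (Sq 7) = 37 := by
    have := dNum_add_fNum isFragmentTiling_pieces12
    rw [fNum_sq_seven, ncard_sq] at this
    omega
  refine ⟨fNum_sq_seven, hd, fun D hD hcard => ?_⟩
  by_contra! h
  have := (hD.isSaturatedCovering h).card_le_dNum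
  omega
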